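/- If α · u(v) ≥ β · Σ_{w ∈ V} s(v,w) for every v ∈ V, then f is monotone non-decreasing: for all B ⊆ A ⊆ V, f(B) ≤ f(A). -/

import Mathlib

/-!
Adding a point `x ∉ S` raises `f` by `α u(x) - (β/2) (∑_{w ∈ S} s(x,w) + ∑_{w ∈ S ∪ {x}} s(x,w))`.
As `s ≥ 0`, both sums are at most the full row sum `∑_w s(x,w)`, so this marginal gain is
nonnegative by the dominance hypothesis, and a set function with nonnegative marginal gains
is monotone.
-/

open Finset

section PairwiseObjective

variable {V : Type*}

theorem sum_sum_insert_insert_of_symm [DecidableEq V] {M : Type*} [AddCommMonoid M]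
    {s : V → V → M} (hsymm : ∀ v w, s v w = s w v) {S : Finset V} {x : V} (hx : x ∉ S) :
    ∑ v ∈ insert x S, ∑ w ∈ insert x S, s v w =
      ∑ v ∈ S, ∑ w ∈ S, s v w + ∑ w ∈ S, s x w + ∑ w ∈ insert x S, s x w := by
  have hcol : ∑ v ∈ S, s v x = ∑ w ∈ S, s x w := sum_congr rfl fun v _ => hsymm v x
  simp only [sum_insert hx, sum_add_distrib, hcol]
  abel

noncomputable def pairwiseObjective (α β : ℝ) (u : V → ℝ) (s : V → V → ℝ) (S : Finset V) : ℝ :=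
  α * ∑ v ∈ S, u v - (β / 2) * ∑ v ∈ S, ∑ w ∈ S, s v w

theorem monotone_pairwiseObjective [Fintype V] [DecidableEq V] {α β : ℝ} (hβ : 0 ≤ β)
    {u : V → ℝ} {s : V → V → ℝ} (hsymm : ∀ v w, s v w = s w v) (hnn : ∀ v w, 0 ≤ s v w)
    (hdom : ∀ v, β * ∑ w, s v w ≤ α * u v) :
    Monotone (pairwiseObjective α β u s) := by
  refine Finset.monotone_iff_forall_le_insert.2 fun S x hx => ?_
  have hrow : ∀ T : Finset V, ∑ w ∈ T, s x w ≤ ∑ w, s x w := fun T =>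
    sum_le_sum_of_subset_of_nonneg (subset_univ T) fun w _ _ => hnn x w
  have hgain : β / 2 * (∑ w ∈ S, s x w + ∑ w ∈ insert x S, s x w) ≤ α * u x :=
    calc β / 2 * (∑ w ∈ S, s x w + ∑ w ∈ insert x S, s x w)
        ≤ β / 2 * (∑ w, s x w + ∑ w, s x w) :=
          mul_le_mul_of_nonneg_left (add_le_add (hrow S) (hrow _)) (by positivity)
      _ = β * ∑ w, s x w := by ring
      _ ≤ α * u x := hdom x
  rw [pairwiseObjective, pairwiseObjective, sum_sum_insert_insert_of_symm hsymm hx,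
    sum_insert (f := u) hx]
  linarith

end PairwiseObjective

theorem pairwise_objective_monotone_general {V : Type*} [Fintype V] [DecidableEq V]
    (α β : ℝ) (hβ : 0 ≤ β)
    (u : V → ℝ) (s : V → V → ℝ)
    (hsymm : ∀ v w, s v w = s w v) (hnn : ∀ v w, 0 ≤ s v w)
    (f : Finset V → ℝ)
    (hf : ∀ S : Finset V, f S = α * ∑ v ∈ S, u v - (β / 2) * ∑ v ∈ S, ∑ w ∈ S, s v w)
    (hdom : ∀ v : V, α * u v ≥ β * ∑ w, s v w) :
    ∀ A B : Finset V, B ⊆ A → f B ≤ f A := by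
  obtain rfl : f = pairwiseObjective α β u s := funext hf
  exact fun A B hBA => monotone_pairwiseObjective hβ hsymm hnn hdom hBA

/-- If the weighted unary terms dominate the pairwise terms, the pairwise objective
is monotone non-decreasing. -/
theorem pairwise_objective_monotone {V : Type*} [Fintype V] [DecidableEq V]
    (α β : ℝ) (hα : 0 < α) (hβ : 0 ≤ β)
    (u : V → ℝ) (s : V → V → ℝ)
    (hsymm : ∀ v w, s v w = s w v) (hnn : ∀ v w, 0 ≤ s v w)
    (hdiag : ∀ v, s v v = 0)
    (f : Finset V → ℝ)
    (hf : ∀ S : Finset V, f S = α * ∑ v ∈ S, u v - (β / 2) * ∑ v ∈ S, ∑ w ∈ S, s v w)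
    (hdom : ∀ v : V, α * u v ≥ β * ∑ w, s v w) :
    ∀ A B : Finset V, B ⊆ A → f B ≤ f A :=
  pairwise_objective_monotone_general α β hβ u s hsymm hnn f hf hdom
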